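/- Let μ be a nonzero positive measure on (0,∞) with ∫ dμ(t)/t < ∞, K its Cauchy transform, a > 0, n ≥ 1. Then G_n(z) = z² + a n² − n² K(z) has no zeros in the closed first quadrant intersected with the open upper half-plane; i.e., any zero of G_n in ℂ₊ satisfies Re z < 0. -/

import Mathlib

/-!
Take the imaginary part of `G_n(z) = 0`: it reads `2 Re z Im z = n² Im K(z)`. For `Im z > 0`
every kernel `(z + t)⁻¹`, `t > 0`, has negative imaginary part, so `Im K(z) < 0` once `μ` charges
`(0, ∞)`; hence `Re z < 0`. The hypothesis `∫ dμ(t)/t < ∞` makes `K(z)` a genuine integral when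
`Re z ≥ 0`, because there `|z + t| ≥ t`.
-/

open MeasureTheory Complex

lemma measure_Ioi_ne_zero_of_measure_Iic_eq_zero {μ : Measure ℝ} (hμ : μ ≠ 0) {c : ℝ}
    (hc : μ (Set.Iic c) = 0) : μ (Set.Ioi c) ≠ 0 := fun hIoi =>
  hμ <| Measure.measure_univ_eq_zero.mp <| by
    rw [← Set.Iic_union_Ioi (a := c)]
    exact measure_union_null hc hIoi

lemma integrableOn_inv_Ioi_of_lintegral_lt_top {μ : Measure ℝ}
    (hint : ∫⁻ t in Set.Ioi (0 : ℝ), ENNReal.ofReal t⁻¹ ∂μ < ⊤) :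
    IntegrableOn (fun t : ℝ => t⁻¹) (Set.Ioi 0) μ := by
  have hnonneg : 0 ≤ᵐ[μ.restrict (Set.Ioi 0)] fun t : ℝ => t⁻¹ := by
    filter_upwards [ae_restrict_mem measurableSet_Ioi] with t ht
    exact inv_nonneg.mpr (le_of_lt ht)
  exact ⟨measurable_inv.aestronglyMeasurable, (hasFiniteIntegral_iff_ofReal hnonneg).mpr hint⟩

lemma norm_inv_add_ofReal_le {z : ℂ} (hz : 0 ≤ z.re) {t : ℝ} (ht : 0 < t) :
    ‖(z + t)⁻¹‖ ≤ t⁻¹ := by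
  rw [norm_inv]
  refine inv_anti₀ ht ?_
  have := re_le_norm (z + t)
  simp only [add_re, ofReal_re] at this
  linarith

lemma add_ofReal_ne_zero {z : ℂ} (hz : z.im ≠ 0) (t : ℝ) : z + t ≠ 0 := fun h =>
  hz (by simpa using congrArg im h)

lemma integrableOn_inv_add_ofReal {μ : Measure ℝ}
    (hint : ∫⁻ t in Set.Ioi (0 : ℝ), ENNReal.ofReal t⁻¹ ∂μ < ⊤) {z : ℂ} (hre : 0 ≤ z.re)
    (him : z.im ≠ 0) : IntegrableOn (fun t : ℝ => (z + t)⁻¹) (Set.Ioi 0) μ := by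
  refine (integrableOn_inv_Ioi_of_lintegral_lt_top hint).mono' ?_ ?_
  · exact ((continuous_const.add continuous_ofReal).inv₀
      (add_ofReal_ne_zero him)).aestronglyMeasurable
  · filter_upwards [ae_restrict_mem measurableSet_Ioi] with t ht
    exact norm_inv_add_ofReal_le hre ht

lemma im_inv_add_ofReal_neg {z : ℂ} (hz : 0 < z.im) (t : ℝ) : ((z + t)⁻¹).im < 0 := by
  rw [inv_im, neg_div, neg_lt_zero]
  exact div_pos (by simpa using hz) (normSq_pos.mpr (add_ofReal_ne_zero hz.ne' t))

lemma im_setIntegral_neg_of_im_neg {X : Type*} [MeasurableSpace X] {μ : Measure X} {s : Set X}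
    {f : X → ℂ}
    (hf : IntegrableOn f s μ) (hneg : ∀ t, (f t).im < 0) (hs : μ s ≠ 0) :
    (∫ t in s, f t ∂μ).im < 0 := by
  have hpos : 0 < ∫ t in s, -(f t).im ∂μ := by
    have hsupp : Function.support (fun t => -(f t).im) = Set.univ :=
      Set.eq_univ_of_forall fun t => (neg_pos.mpr (hneg t)).ne'
    rw [setIntegral_pos_iff_support_of_nonneg_ae
      (Filter.Eventually.of_forall fun t => (neg_pos.mpr (hneg t)).le) hf.im.neg, hsupp,
      Set.univ_inter]
    exact pos_iff_ne_zero.mpr hs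
  rw [integral_neg] at hpos
  have := integral_im (𝕜 := ℂ) hf
  simp only [RCLike.im_to_complex] at this
  linarith

theorem GP2_zero_in_upper_half_plane_second_quadrant_general
    (μ : Measure ℝ) (hμ : μ ≠ 0) (hsupp : μ (Set.Iic 0) = 0)
    (hint : ∫⁻ t in Set.Ioi (0 : ℝ), ENNReal.ofReal t⁻¹ ∂μ < ⊤)
    (K : ℂ → ℂ) (hK : ∀ z, K z = ∫ t in Set.Ioi (0 : ℝ), (z + (t : ℂ))⁻¹ ∂μ)
    (a : ℝ) (n : ℕ) (hn : 1 ≤ n) :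
    ∀ z : ℂ, 0 < z.im →
      z ^ 2 + (a : ℂ) * (n : ℂ) ^ 2 - (n : ℂ) ^ 2 * K z = 0 → z.re < 0 := by
  intro z hz hG
  by_contra! hre
  have hK_im : (K z).im < 0 := by
    rw [hK z]
    exact im_setIntegral_neg_of_im_neg (integrableOn_inv_add_ofReal hint hre hz.ne')
      (im_inv_add_ofReal_neg hz) (measure_Ioi_ne_zero_of_measure_Iic_eq_zero hμ hsupp)
  have hG_im : 2 * z.re * z.im - (n : ℝ) ^ 2 * (K z).im = 0 := by
    have := congrArg im hG
    simp only [sub_im, add_im, mul_im, pow_two, mul_re, ofReal_re, ofReal_im, natCast_re,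
      natCast_im, zero_im] at this
    linarith
  have hn_sq : (0 : ℝ) < (n : ℝ) ^ 2 := pow_pos (Nat.cast_pos.mpr hn) 2
  linarith [mul_nonneg hre hz.le, mul_pos hn_sq (neg_pos.mpr hK_im)]

theorem GP2_zero_in_upper_half_plane_second_quadrant
    (μ : Measure ℝ) (hμ : μ ≠ 0) (hsupp : μ (Set.Iic 0) = 0)
    (hint : ∫⁻ t in Set.Ioi (0 : ℝ), ENNReal.ofReal t⁻¹ ∂μ < ⊤)
    (K : ℂ → ℂ) (hK : ∀ z, K z = ∫ t in Set.Ioi (0 : ℝ), (z + (t : ℂ))⁻¹ ∂μ)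
    (a : ℝ) (ha : 0 < a) (n : ℕ) (hn : 1 ≤ n) :
    ∀ z : ℂ, 0 < z.im →
      z ^ 2 + (a : ℂ) * (n : ℂ) ^ 2 - (n : ℂ) ^ 2 * K z = 0 → z.re < 0 :=
  GP2_zero_in_upper_half_plane_second_quadrant_general μ hμ hsupp hint K hK a n hn
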